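/- arXiv:2012.05692 — 2 statements merged into one kernel-verified Lean document; each statement's English description precedes it below -/
import Mathlib

section
/- If an open set S ⊆ ℝ³ is 3-dimensionally δ-sparse around a point x₀ at scale r (i.e. μ₃(S ∩ B_r(x₀)) ≤ δ · μ₃(B_r(x₀))), then S is 1-dimensionally δ^{1/3}-sparse around x₀ at scale r, i.e. there exists a unit vector ν such that μ₁(S ∩ (x₀ − rν, x₀ + rν)) ≤ δ^{1/3} · 2r. -/
open MeasureTheory Metric Set
open scoped ENNReal
open Module

/-! In polar coordinates `∫_U ‖y‖^(1-d) dy` is the integral over the unit sphere of the lengths of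
the rays `{t > 0 | t • ν ∈ U}`. Among sets of measure at most that of the ball `B_ρ(0)`, this
weighted integral is largest for the ball itself (bathtub principle: the weight decreases in `‖y‖`),
whose rays all have length `ρ`. Applying this to `U` and `-U`, the average over `ν` of the length
of the line slice `{t | t • ν ∈ U}` is at most `2ρ`, so some direction achieves it. For `U` the
set `S ∩ B_r(x₀)` moved to the origin, `ρ = δ^(1/3) r`. -/

theorem setLIntegral_le_setLIntegral_of_measure_le {α : Type*} [MeasurableSpace α]
    {μ : Measure α} {V B : Set α} {w : α → ℝ≥0∞} (c : ℝ≥0∞)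
    (hV : MeasurableSet V) (hB : MeasurableSet B) (hμB : μ B ≠ ∞) (hVB : μ V ≤ μ B)
    (hwV : ∀ x ∈ V \ B, w x ≤ c) (hwB : ∀ x ∈ B \ V, c ≤ w x) :
    ∫⁻ x in V, w x ∂μ ≤ ∫⁻ x in B, w x ∂μ := by
  have hdiff : μ (V \ B) ≤ μ (B \ V) := by
    have hfin : μ (V ∩ B) ≠ ∞ := measure_ne_top_of_subset inter_subset_right hμB
    rw [← ENNReal.add_le_add_iff_right hfin, measure_sdiff_add_inter V hB, inter_comm,
      measure_sdiff_add_inter B hV]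
    exact hVB
  calc ∫⁻ x in V, w x ∂μ = (∫⁻ x in V ∩ B, w x ∂μ) + ∫⁻ x in V \ B, w x ∂μ :=
        (lintegral_inter_add_sdiff w V hB).symm
    _ ≤ (∫⁻ x in B ∩ V, w x ∂μ) + c * μ (V \ B) := by
        rw [inter_comm, ← setLIntegral_const]
        gcongr 1
        exact setLIntegral_mono' (hV.diff hB) hwV
    _ ≤ (∫⁻ x in B ∩ V, w x ∂μ) + ∫⁻ x in B \ V, w x ∂μ := by
        grw [hdiff, ← setLIntegral_const]
        gcongr 1
        exact setLIntegral_mono' (hB.diff hV) hwB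
    _ = ∫⁻ x in B, w x ∂μ := lintegral_inter_add_sdiff w B hV

section Rays

variable {E : Type*} [NormedAddCommGroup E] [NormedSpace ℝ E]

noncomputable def rayLength (U : Set E) (v : E) : ℝ≥0∞ :=
  volume {t : ℝ | 0 < t ∧ t • v ∈ U}

theorem measurable_rayLength [MeasurableSpace E] [BorelSpace E] {U : Set E}
    (hU : MeasurableSet U) : Measurable (rayLength U) := by
  have : MeasurableSet {p : E × ℝ | 0 < p.2 ∧ p.2 • p.1 ∈ U} :=
    (measurableSet_lt measurable_const measurable_snd).inter
      (hU.preimage (measurable_snd.smul measurable_fst))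
  exact measurable_measure_prodMk_left this

theorem rayLength_ball_zero {v : E} (hv : ‖v‖ = 1) (ρ : ℝ) :
    rayLength (ball 0 ρ) v = ENNReal.ofReal ρ := by
  have : {t : ℝ | 0 < t ∧ t • v ∈ ball 0 ρ} = Ioo 0 ρ := by
    ext t
    simp +contextual only [mem_ofPred_eq, mem_ball_zero_iff, norm_smul, hv, mul_one,
      Real.norm_eq_abs, mem_Ioo, and_congr_right_iff, abs_of_pos, implies_true]
  rw [rayLength, this, Real.volume_Ioo, sub_zero]

theorem volume_smul_mem_le_rayLength_add_rayLength_neg (U : Set E) (v : E) :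
    volume {t : ℝ | t • v ∈ U} ≤ rayLength U v + rayLength (-U) v := by
  have hsub : {t : ℝ | t • v ∈ U} ⊆
      {t : ℝ | 0 < t ∧ t • v ∈ U} ∪ (-{t : ℝ | 0 < t ∧ t • v ∈ -U} ∪ {0}) := by
    intro t ht
    rcases lt_trichotomy 0 t with h | rfl | h
    · exact Or.inl ⟨h, ht⟩
    · exact Or.inr (Or.inr rfl)
    · exact Or.inr (Or.inl ⟨neg_pos.2 h, by simpa [neg_smul] using ht⟩)
  calc volume {t : ℝ | t • v ∈ U}
      ≤ rayLength U v + (volume (-{t : ℝ | 0 < t ∧ t • v ∈ -U}) + volume {(0 : ℝ)}) := by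
        grw [hsub, measure_union_le, measure_union_le]
        rfl
    _ = rayLength U v + rayLength (-U) v := by
        rw [Measure.measure_neg, measure_singleton, add_zero]; rfl

end Rays

section Polar

variable {E : Type*} [NormedAddCommGroup E] [NormedSpace ℝ E] [FiniteDimensional ℝ E]
  [MeasurableSpace E] [BorelSpace E] [Nontrivial E] (μ : Measure E) [μ.IsAddHaarMeasure]

theorem lintegral_eq_lintegral_toSphere_lintegral_Ioi {f : E → ℝ≥0∞} (hf : Measurable f) :
    ∫⁻ y, f y ∂μ = ∫⁻ ν : sphere (0 : E) 1, (∫⁻ t in Ioi (0 : ℝ),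
      ENNReal.ofReal (t ^ (finrank ℝ E - 1)) * f (t • (ν : E))) ∂μ.toSphere := by
  have hg : Measurable fun p : sphere (0 : E) 1 × Ioi (0 : ℝ) => f (p.2.1 • (p.1 : E)) :=
    hf.comp ((continuous_subtype_val.comp continuous_snd).smul
      (continuous_subtype_val.comp continuous_fst)).measurable
  calc ∫⁻ y, f y ∂μ = ∫⁻ y : ({0}ᶜ : Set E), f y ∂μ.comap (↑) := by
        rw [lintegral_subtype_comap (measurableSet_singleton 0).compl,
          restrict_compl_singleton]
    _ = ∫⁻ p, f (p.2.1 • (p.1 : E)) ∂μ.toSphere.prod (.volumeIoiPow (finrank ℝ E - 1)) := by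
        simpa using μ.measurePreserving_homeomorphUnitSphereProd.lintegral_comp_emb
          (Homeomorph.measurableEmbedding _)
          (f ∘ Subtype.val ∘ (homeomorphUnitSphereProd E).symm)
    _ = _ := by
        rw [lintegral_prod _ hg.aemeasurable]
        refine lintegral_congr fun ν => ?_
        refine (lintegral_withDensity_eq_lintegral_mul _
          (measurable_subtype_coe.pow_const _).ennreal_ofReal
          (hf.comp (measurable_subtype_coe.smul_const (ν : E)))).trans ?_
        exact lintegral_subtype_comap measurableSet_Ioi
          (fun t : ℝ => ENNReal.ofReal (t ^ (finrank ℝ E - 1)) * f (t • (ν : E)))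

theorem setLIntegral_inv_norm_pow_eq_lintegral_rayLength {U : Set E} (hU : MeasurableSet U) :
    ∫⁻ y in U, (ENNReal.ofReal ‖y‖ ^ (finrank ℝ E - 1))⁻¹ ∂μ
      = ∫⁻ ν : sphere (0 : E) 1, rayLength U ν ∂μ.toSphere := by
  have hw : Measurable fun y : E => (ENNReal.ofReal ‖y‖ ^ (finrank ℝ E - 1))⁻¹ := by fun_prop
  rw [← lintegral_indicator hU, lintegral_eq_lintegral_toSphere_lintegral_Ioi μ
    (hw.indicator hU)]
  refine lintegral_congr fun ν => ?_
  have hν : ‖(ν : E)‖ = 1 := norm_eq_of_mem_sphere ν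
  have hslice : MeasurableSet {t : ℝ | t • (ν : E) ∈ U} :=
    hU.preimage (measurable_id.smul_const _)
  calc ∫⁻ t in Ioi 0, ENNReal.ofReal (t ^ (finrank ℝ E - 1))
        * U.indicator (fun y => (ENNReal.ofReal ‖y‖ ^ (finrank ℝ E - 1))⁻¹) (t • (ν : E))
      = ∫⁻ t in Ioi 0, {t : ℝ | t • (ν : E) ∈ U}.indicator 1 t := by
        refine setLIntegral_congr_fun measurableSet_Ioi fun t (ht : 0 < t) => ?_
        have hnorm : ‖t • (ν : E)‖ = t := by
          rw [norm_smul, hν, mul_one, Real.norm_of_nonneg ht.le]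
        by_cases h : t • (ν : E) ∈ U
        · rw [indicator_of_mem h, indicator_of_mem (show t ∈ {t : ℝ | t • (ν : E) ∈ U} from h),
            Pi.one_apply, hnorm, ← ENNReal.ofReal_pow ht.le]
          exact ENNReal.mul_inv_cancel (ENNReal.ofReal_pos.2 (pow_pos ht _)).ne'
            ENNReal.ofReal_ne_top
        · simp [h]
    _ = rayLength U ν := by
        rw [lintegral_indicator_one hslice, Measure.restrict_apply hslice, rayLength,
          inter_comm]
        rfl

theorem lintegral_rayLength_le {U : Set E} (hU : MeasurableSet U) {ρ : ℝ}
    (hUρ : μ U ≤ μ (ball 0 ρ)) :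
    ∫⁻ ν : sphere (0 : E) 1, rayLength U ν ∂μ.toSphere
      ≤ ENNReal.ofReal ρ * μ.toSphere univ := by
  calc ∫⁻ ν : sphere (0 : E) 1, rayLength U ν ∂μ.toSphere
      = ∫⁻ y in U, (ENNReal.ofReal ‖y‖ ^ (finrank ℝ E - 1))⁻¹ ∂μ :=
        (setLIntegral_inv_norm_pow_eq_lintegral_rayLength μ hU).symm
    _ ≤ ∫⁻ y in ball 0 ρ, (ENNReal.ofReal ‖y‖ ^ (finrank ℝ E - 1))⁻¹ ∂μ := by
        refine setLIntegral_le_setLIntegral_of_measure_le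
          (ENNReal.ofReal ρ ^ (finrank ℝ E - 1))⁻¹ hU measurableSet_ball measure_ball_lt_top.ne hUρ
          (fun y hy => ?_) (fun y hy => ?_)
        · have : ρ ≤ ‖y‖ := by simpa using hy.2
          gcongr
        · have : ‖y‖ ≤ ρ := (mem_ball_zero_iff.1 hy.1).le
          gcongr
    _ = ∫⁻ ν : sphere (0 : E) 1, ENNReal.ofReal ρ ∂μ.toSphere := by
        rw [setLIntegral_inv_norm_pow_eq_lintegral_rayLength μ measurableSet_ball]
        exact lintegral_congr fun ν => rayLength_ball_zero (norm_eq_of_mem_sphere ν) ρ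
    _ = ENNReal.ofReal ρ * μ.toSphere univ := lintegral_const _

theorem exists_norm_eq_one_volume_smul_mem_le {U : Set E} (hU : MeasurableSet U) {ρ : ℝ}
    (hUρ : μ U ≤ μ (ball 0 ρ)) :
    ∃ v : E, ‖v‖ = 1 ∧ volume {t : ℝ | t • v ∈ U} ≤ ENNReal.ofReal (2 * ρ) := by
  set f : sphere (0 : E) 1 → ℝ≥0∞ := fun ν => rayLength U ν + rayLength (-U) ν
  have hf : Measurable f :=
    ((measurable_rayLength hU).add (measurable_rayLength hU.neg)).comp measurable_subtype_coe
  have hint : ∫⁻ ν, f ν ∂μ.toSphere ≤ ENNReal.ofReal (2 * ρ) * μ.toSphere univ := by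
    calc ∫⁻ ν, f ν ∂μ.toSphere
        = ∫⁻ ν : sphere (0 : E) 1, rayLength U ν ∂μ.toSphere
          + ∫⁻ ν : sphere (0 : E) 1, rayLength (-U) ν ∂μ.toSphere :=
          lintegral_add_left ((measurable_rayLength hU).comp measurable_subtype_coe) _
      _ ≤ ENNReal.ofReal ρ * μ.toSphere univ + ENNReal.ofReal ρ * μ.toSphere univ :=
          add_le_add (lintegral_rayLength_le μ hU hUρ)
            (lintegral_rayLength_le μ hU.neg ((Measure.measure_neg μ U).trans_le hUρ))
      _ = ENNReal.ofReal (2 * ρ) * μ.toSphere univ := by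
          rw [← add_mul, ← two_mul, ENNReal.ofReal_mul zero_le_two, ENNReal.ofReal_ofNat]
  obtain ⟨ν, hν⟩ := exists_le_laverage μ.toSphere_ne_zero hf.aemeasurable
  refine ⟨ν, norm_eq_of_mem_sphere ν, ?_⟩
  calc volume {t : ℝ | t • (ν : E) ∈ U} ≤ f ν :=
        volume_smul_mem_le_rayLength_add_rayLength_neg U ν
    _ ≤ ⨍⁻ ν, f ν ∂μ.toSphere := hν
    _ ≤ ENNReal.ofReal (2 * ρ) := by
        rw [laverage_eq]
        exact ENNReal.div_le_of_le_mul hint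

theorem addHaar_ball_rpow_inv_finrank_mul (x y : E) {δ r : ℝ} (hδ : 0 ≤ δ) (hr : 0 ≤ r) :
    μ (ball y (δ ^ (finrank ℝ E : ℝ)⁻¹ * r)) = ENNReal.ofReal δ * μ (ball x r) := by
  rw [μ.addHaar_ball _ (by positivity), μ.addHaar_ball _ hr, μ.addHaar_ball_center, mul_pow,
    Real.rpow_inv_natCast_pow hδ finrank_pos.ne', ENNReal.ofReal_mul hδ, mul_assoc]

end Polar

theorem sparse3D_implies_sparse1D_general
    (S : Set (EuclideanSpace ℝ (Fin 3)))
    (x₀ : EuclideanSpace ℝ (Fin 3)) (δ r : ℝ) (hδ : δ ∈ Set.Ioo (0:ℝ) 1) (hr : 0 < r)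
    (hsparse : volume (S ∩ ball x₀ r) ≤ ENNReal.ofReal δ * volume (ball x₀ r)) :
    ∃ ν : EuclideanSpace ℝ (Fin 3), ‖ν‖ = 1 ∧
      volume {t : ℝ | t ∈ Set.Ioo (-r) r ∧ x₀ + t • ν ∈ S}
        ≤ ENNReal.ofReal (δ ^ ((1:ℝ)/3) * (2 * r)) := by
  -- `S` need not be measurable; its measurable hull has the same measure and larger slices.
  set U := (x₀ + ·) ⁻¹' toMeasurable volume (S ∩ ball x₀ r)
  have hU : MeasurableSet U :=
    (measurableSet_toMeasurable _ _).preimage (measurable_const_add x₀)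
  have hUρ : volume U ≤ volume (ball (0 : EuclideanSpace ℝ (Fin 3)) (δ ^ ((1:ℝ)/3) * r)) := by
    have h3 : ((1:ℝ)/3) = (finrank ℝ (EuclideanSpace ℝ (Fin 3)) : ℝ)⁻¹ := by simp
    rw [measure_preimage_add, measure_toMeasurable, h3,
      addHaar_ball_rpow_inv_finrank_mul volume x₀ 0 hδ.1.le hr.le]
    exact hsparse
  obtain ⟨ν, hν, hle⟩ := exists_norm_eq_one_volume_smul_mem_le volume hU hUρ
  refine ⟨ν, hν, (measure_mono fun t ht => ?_).trans (hle.trans_eq (by ring_nf))⟩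
  refine subset_toMeasurable _ _ ⟨ht.2, ?_⟩
  rw [mem_ball, dist_self_add_left, norm_smul, hν, mul_one, Real.norm_eq_abs]
  exact abs_lt.2 ht.1

/-- If an open set `S ⊆ ℝ³` is 3D `δ`-sparse around `x₀` at scale `r`, then it is
1D `δ^(1/3)`-sparse around `x₀` at scale `r`: there is a unit vector `ν` such that the
1-dimensional measure of `{t ∈ (-r, r) | x₀ + t • ν ∈ S}` is at most `δ^(1/3) · 2r`. -/
theorem sparse3D_implies_sparse1D
    (S : Set (EuclideanSpace ℝ (Fin 3))) (hS : IsOpen S)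
    (x₀ : EuclideanSpace ℝ (Fin 3)) (δ r : ℝ) (hδ : δ ∈ Set.Ioo (0:ℝ) 1) (hr : 0 < r)
    (hsparse : volume (S ∩ ball x₀ r) ≤ ENNReal.ofReal δ * volume (ball x₀ r)) :
    ∃ ν : EuclideanSpace ℝ (Fin 3), ‖ν‖ = 1 ∧
      volume {t : ℝ | t ∈ Set.Ioo (-r) r ∧ x₀ + t • ν ∈ S}
        ≤ ENNReal.ofReal (δ ^ ((1:ℝ)/3) * (2 * r)) :=
  sparse3D_implies_sparse1D_general S x₀ δ r hδ hr hsparse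
end

section
/- (Transitivity of monotone behavior of rescaled derivative quotients via Landau–Kolmogorov.) Let f : ℝ → ℝ be smooth and bounded with all derivatives bounded, and suppose for natural numbers k ≥ 1 that ‖f^{(k+1)}‖_∞^{1/(k+2)} ≤ A ‖f^{(k)}‖_∞^{1/(k+1)} for some constant A ≥ 1. Then ‖f^{(k)}‖_∞^{1/(k+1)} ≤ C(A, k) ‖f^{(k−1)}‖_∞^{1/k} for a constant C(A,k) depending only on A and k. -/
open Real intervalIntegral

/-- Landau-type inequality with crude constant 3. -/
lemma landau_aux (g : ℝ → ℝ) (hg : ContDiff ℝ (⊤ : ℕ∞) g) (M₀ M₂ : ℝ)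
    (h0 : 0 < M₀) (h2 : 0 < M₂)
    (hb0 : ∀ x, |g x| ≤ M₀) (hb2 : ∀ x, |deriv (deriv g) x| ≤ M₂) (x : ℝ) :
    |deriv g x| ≤ 3 * Real.sqrt (M₀ * M₂) := by
  set h : ℝ := Real.sqrt (M₀ / M₂) with hh
  have hhpos : 0 < h := Real.sqrt_pos.mpr (div_pos h0 h2)
  have hdg : ContDiff ℝ (⊤ : ℕ∞) (deriv g) := (contDiff_infty_iff_deriv.mp hg).2
  have hdiff : Differentiable ℝ g := hg.differentiable (by simp)
  have hddiff : Differentiable ℝ (deriv g) := hdg.differentiable (by simp)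
  -- Lipschitz-type bound on deriv g
  have key : ∀ t : ℝ, |deriv g t - deriv g x| ≤ M₂ * |t - x| := by
    intro t
    have := convex_univ.norm_image_sub_le_of_norm_deriv_le
      (f := deriv g) (fun y _ => hddiff y) (fun y _ => hb2 y)
      (Set.mem_univ x) (Set.mem_univ t)
    simpa using this
  have hint : IntervalIntegrable (deriv g) MeasureTheory.volume x (x + h) :=
    (hdg.continuous).intervalIntegrable _ _
  have h1 : ∫ t in x..(x + h), deriv g t = g (x + h) - g x :=
    integral_deriv_eq_sub (fun t _ => hdiff t) hint
  have h2' : ∫ t in x..(x + h), (deriv g t - deriv g x)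
      = (g (x + h) - g x) - h * deriv g x := by
    rw [intervalIntegral.integral_sub hint (intervalIntegrable_const), h1,
      intervalIntegral.integral_const]
    simp [smul_eq_mul]
  have h3 : |∫ t in x..(x + h), (deriv g t - deriv g x)| ≤ M₂ * h * |x + h - x| := by
    rw [← Real.norm_eq_abs]
    apply intervalIntegral.norm_integral_le_of_norm_le_const
    intro t ht
    rw [Set.uIoc_of_le (by linarith)] at ht
    have : |t - x| ≤ h := by
      rw [abs_le]; constructor <;> [linarith [ht.1]; linarith [ht.2]]
    calc ‖deriv g t - deriv g x‖ ≤ M₂ * |t - x| := key t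
      _ ≤ M₂ * h := by nlinarith
  have h4 : |h * deriv g x| ≤ 2 * M₀ + M₂ * h ^ 2 := by
    have hA := abs_sub (g (x + h) - g x) ((g (x + h) - g x) - h * deriv g x)
    rw [show (g (x + h) - g x) - ((g (x + h) - g x) - h * deriv g x) = h * deriv g x
      by ring] at hA
    have hB : |g (x + h) - g x| ≤ 2 * M₀ := by
      have := abs_sub (g (x + h)) (g x)
      have := hb0 (x + h); have := hb0 x; linarith
    have hC : |(g (x + h) - g x) - h * deriv g x| ≤ M₂ * h * h := by
      have := h3
      rw [h2', show |x + h - x| = h by rw [show x + h - x = h by ring, abs_of_pos hhpos]] at this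
      exact this
    nlinarith
  -- now h^2 = M₀ / M₂ and sqrt(M₀M₂) * h = M₀
  have hsq : h ^ 2 = M₀ / M₂ := Real.sq_sqrt (le_of_lt (div_pos h0 h2))
  have hmul : Real.sqrt (M₀ * M₂) * h = M₀ := by
    rw [hh, ← Real.sqrt_mul (by positivity)]
    rw [show M₀ * M₂ * (M₀ / M₂) = M₀ ^ 2 by field_simp]
    exact Real.sqrt_sq h0.le
  have h5 : |deriv g x| * h ≤ 3 * M₀ := by
    have : |h * deriv g x| = |deriv g x| * h := by
      rw [abs_mul, abs_of_pos hhpos, mul_comm]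
    rw [this] at h4
    have : M₂ * h ^ 2 = M₀ := by rw [hsq]; field_simp
    linarith
  have := mul_le_mul_of_nonneg_right (le_refl (3 * Real.sqrt (M₀ * M₂))) hhpos.le
  nlinarith [h5, hmul, hhpos]

/-- Transitivity of monotone behavior of rescaled derivative quotients: if
`‖f^(k+1)‖^(1/(k+2)) ≤ A ‖f^(k)‖^(1/(k+1))` for a smooth bounded `f : ℝ → ℝ` with all
derivatives bounded and the relevant sup-norms positive, then
`‖f^(k)‖^(1/(k+1)) ≤ C(A,k) ‖f^(k-1)‖^(1/k)` with `C` depending only on `A` and `k`. -/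
theorem derivative_quotient_transitivity (A : ℝ) (hA : 1 ≤ A) (k : ℕ) (hk : 1 ≤ k) :
    ∃ C : ℝ, 0 < C ∧ ∀ f : ℝ → ℝ,
      ContDiff ℝ (⊤ : ℕ∞) f →
      (∀ n : ℕ, ∃ B : ℝ, ∀ x : ℝ, |iteratedDeriv n f x| ≤ B) →
      (0 < ⨆ x, |iteratedDeriv (k - 1) f x|) →
      (0 < ⨆ x, |iteratedDeriv k f x|) →
      (0 < ⨆ x, |iteratedDeriv (k + 1) f x|) →
      (⨆ x, |iteratedDeriv (k + 1) f x|) ^ ((1:ℝ) / (k + 2))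
          ≤ A * (⨆ x, |iteratedDeriv k f x|) ^ ((1:ℝ) / (k + 1)) →
      (⨆ x, |iteratedDeriv k f x|) ^ ((1:ℝ) / (k + 1))
          ≤ C * (⨆ x, |iteratedDeriv (k - 1) f x|) ^ ((1:ℝ) / k) := by
  have hApos : (0:ℝ) < A := lt_of_lt_of_le one_pos hA
  refine ⟨(9 * A ^ (k + 2)) ^ ((1:ℝ) / k), by positivity, ?_⟩
  intro f hf hbdd hpos0 hpos1 hpos2 hyp
  obtain ⟨m, rfl⟩ : ∃ m, k = m + 1 := ⟨k - 1, (Nat.succ_pred_eq_of_pos hk).symm⟩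
  simp only [Nat.add_sub_cancel] at *
  set M₀ := ⨆ x, |iteratedDeriv m f x| with hM₀
  set M₁ := ⨆ x, |iteratedDeriv (m + 1) f x| with hM₁
  set M₂ := ⨆ x, |iteratedDeriv (m + 1 + 1) f x| with hM₂
  -- boundedness of the sups
  have hble : ∀ n : ℕ, ∀ x : ℝ, |iteratedDeriv n f x| ≤ ⨆ y, |iteratedDeriv n f y| := by
    intro n x
    obtain ⟨B, hB⟩ := hbdd n
    exact le_ciSup ⟨B, Set.forall_mem_range.mpr hB⟩ x
  -- the Landau inequality
  have hg : ContDiff ℝ (⊤ : ℕ∞) (iteratedDeriv m f) := by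
    rw [iteratedDeriv_eq_iterate]
    exact ContDiff.iterate_deriv m (hf.of_le (by simp))
  have hd1 : deriv (iteratedDeriv m f) = iteratedDeriv (m + 1) f := iteratedDeriv_succ.symm
  have hd2 : deriv (deriv (iteratedDeriv m f)) = iteratedDeriv (m + 1 + 1) f := by
    rw [hd1]; exact iteratedDeriv_succ.symm
  have hland : M₁ ≤ 3 * Real.sqrt (M₀ * M₂) := by
    apply ciSup_le
    intro x
    have := landau_aux (iteratedDeriv m f) hg M₀ M₂ hpos0 hpos2
      (hble m) (fun y => by rw [hd2]; exact hble _ y) x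
    rwa [hd1] at this
  -- pass to logarithms
  have hm1 : (0:ℝ) < (m:ℝ) + 1 := by positivity
  have hm2 : (0:ℝ) < (m:ℝ) + 2 := by positivity
  have hm3 : (0:ℝ) < (m:ℝ) + 3 := by positivity
  have hlogA : 0 ≤ Real.log A := Real.log_nonneg hA
  have hlog3 : (0:ℝ) ≤ Real.log 3 := Real.log_nonneg (by norm_num)
  have h1 : Real.log M₁ ≤ Real.log 3 + (Real.log M₀ + Real.log M₂) / 2 := by
    calc Real.log M₁ ≤ Real.log (3 * Real.sqrt (M₀ * M₂)) := Real.log_le_log hpos1 hland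
      _ = Real.log 3 + (Real.log M₀ + Real.log M₂) / 2 := by
          rw [Real.log_mul (by norm_num) (by positivity), Real.log_sqrt (by positivity),
            Real.log_mul hpos0.ne' hpos2.ne']
  have h2 : ((m:ℝ) + 2) * Real.log M₂
      ≤ ((m:ℝ) + 2) * ((m:ℝ) + 3) * Real.log A + ((m:ℝ) + 3) * Real.log M₁ := by
    have h := Real.log_le_log (by positivity) hyp
    rw [Real.log_rpow hpos2, Real.log_mul hApos.ne' (by positivity),
      Real.log_rpow hpos1] at h
    push_cast at h
    have hne1 : ((m:ℝ) + 1 + 1) ≠ 0 := by positivity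
    have hne2 : ((m:ℝ) + 1 + 2) ≠ 0 := by positivity
    field_simp at h
    nlinarith [h]
  have hmain : ((m:ℝ) + 1) * Real.log M₁
      ≤ 2 * ((m:ℝ) + 2) * Real.log 3 + ((m:ℝ) + 2) * ((m:ℝ) + 3) * Real.log A
        + ((m:ℝ) + 2) * Real.log M₀ := by
    nlinarith [mul_le_mul_of_nonneg_left h1 hm2.le, h2]
  -- convert goal to logs
  rw [← Real.log_le_log_iff (by positivity) (by positivity)]
  rw [Real.log_rpow hpos1, Real.log_mul (by positivity) (by positivity),
    Real.log_rpow hpos0, Real.log_rpow (by positivity : (0:ℝ) < 9 * A ^ (m + 1 + 2)),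
    Real.log_mul (by norm_num) (by positivity), Real.log_pow,
    show (9:ℝ) = 3 ^ 2 by norm_num, Real.log_pow]
  push_cast
  have hne0 : ((m:ℝ) + 1) ≠ 0 := by positivity
  have hne1 : ((m:ℝ) + 1 + 1) ≠ 0 := by positivity
  rw [show (1:ℝ) / ((m:ℝ) + 1 + 1) * Real.log M₁ = Real.log M₁ / ((m:ℝ) + 1 + 1) by ring,
    show (1:ℝ) / ((m:ℝ) + 1) * (2 * Real.log 3 + ((m:ℝ) + 1 + 2) * Real.log A)
        + 1 / ((m:ℝ) + 1) * Real.log M₀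
      = (2 * Real.log 3 + ((m:ℝ) + 1 + 2) * Real.log A + Real.log M₀) / ((m:ℝ) + 1) by ring,
    div_le_div_iff₀ (by linarith) (by linarith)]
  nlinarith [hmain, hm1, hm2, hm3, hlog3, hlogA]
end
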